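/- arXiv:0910.4709 — 3 statements merged into one kernel-verified Lean document; each statement's English description precedes it below -/
import Mathlib

section
/- Let c_1,...,c_r be positive integers, each greater than 1, and let m = c_1 + ... + c_r. Then the sets {c_1, c_1+c_2, ..., c_1+...+c_r} and {1+c_1, 1+c_1+c_2, ..., 1+c_1+...+c_r} are disjoint modulo m. -/
/-!
Two distinct partial sums differ by at least `2`, since every summand is at least `2`;
so no partial sum equals another one plus `1`. Modulo `m` nothing new can happen:
`S h` lies in `[2, m]` and `1 + S k` in `[3, m + 1]`, so their difference has absolute
value below `m`, and a congruence between them is an equality.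
-/

open Finset

theorem sum_range_ne_one_add_sum_range {r a b : ℕ} {c : ℕ → ℕ} (hc : ∀ i < r, 2 ≤ c i)
    (ha : a ≤ r) : ∑ i ∈ range a, c i ≠ 1 + ∑ i ∈ range b, c i := by
  intro heq
  rcases le_or_gt a b with hab | hba
  · have := sum_le_sum_of_subset (f := c) (range_subset_range.2 hab)
    omega
  · have hsucc := sum_le_sum_of_subset (f := c) (range_subset_range.2 (Nat.succ_le_of_lt hba))
    rw [sum_range_succ] at hsucc
    have := hc b (by omega)
    omega

theorem ZMod.eq_of_natCast_eq_of_lt_add {m a b : ℕ} (heq : (a : ZMod m) = b)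
    (hab : a < b + m) (hba : b < a + m) : a = b :=
  ((ZMod.natCast_eq_natCast_iff a b m).1 heq).eq_of_abs_lt (by rw [abs_lt]; omega)

theorem stmt1_general (r m : ℕ) (c : ℕ → ℕ)
    (hc : ∀ i < r, 2 ≤ c i) (hm : m = ∑ i ∈ Finset.range r, c i) :
    ∀ h k, 1 ≤ h → h ≤ r → 1 ≤ k → k ≤ r →
      ((∑ i ∈ Finset.range h, c i : ℕ) : ZMod m) ≠
        1 + ((∑ i ∈ Finset.range k, c i : ℕ) : ZMod m) := by
  intro h k h1 hhr _ hkr heq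
  have hSh_le : ∑ i ∈ range h, c i ≤ m := hm ▸ sum_le_sum_of_subset (range_subset_range.2 hhr)
  have hSk_le : ∑ i ∈ range k, c i ≤ m := hm ▸ sum_le_sum_of_subset (range_subset_range.2 hkr)
  have hSh_ge : 2 ≤ ∑ i ∈ range h, c i :=
    (hc 0 (by omega)).trans (single_le_sum (fun _ _ ↦ Nat.zero_le _) (mem_range.2 h1))
  exact sum_range_ne_one_add_sum_range hc hhr <|
    ZMod.eq_of_natCast_eq_of_lt_add (m := m) (by exact_mod_cast heq) (by omega) (by omega)

/-- If `c 0, …, c (r-1)` are all `≥ 2` and `m` is their sum, then the partial sums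
`S h = c 0 + ⋯ + c (h-1)` (for `1 ≤ h ≤ r`) and the shifted partial sums `1 + S k`
are disjoint modulo `m`. -/
theorem stmt1 (r m : ℕ) (c : ℕ → ℕ) (hr : 0 < r)
    (hc : ∀ i < r, 2 ≤ c i) (hm : m = ∑ i ∈ Finset.range r, c i) :
    ∀ h k, 1 ≤ h → h ≤ r → 1 ≤ k → k ≤ r →
      ((∑ i ∈ Finset.range h, c i : ℕ) : ZMod m) ≠
        1 + ((∑ i ∈ Finset.range k, c i : ℕ) : ZMod m) :=
  stmt1_general r m c hc hm
end

section
/- Let c_1,...,c_r be positive integers with m = c_1 + ... + c_r, and suppose c_1 ≥ 1 + m/2. Then the sets A = {∑_{i=1}^h c_i : 1 ≤ h ≤ r} and B = {(m + 1 - c_1) + ∑_{i=1}^k c_i : 1 ≤ k ≤ r} are disjoint modulo m. -/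
/-! Write `a = S_h` and `b = (m + 1 - c₁) + S_k`. Since `c₁ ≤ S_h, S_k ≤ m`, we get
`m + 1 ≤ b` and `b - a ≤ 2m + 1 - 2c₁ ≤ m - 1`, so `0 < b - a < m` and `a ≢ b (mod m)`. -/

open Finset

theorem ZMod.natCast_ne_natCast_of_lt_of_lt_add {m a b : ℕ} (hab : a < b) (hba : b < a + m) :
    (a : ZMod m) ≠ b := by
  rw [Ne, ZMod.natCast_eq_natCast_iff, Nat.modEq_iff_dvd' hab.le]
  intro hdvd
  have := Nat.le_of_dvd (Nat.sub_pos_of_lt hab) hdvd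
  omega

theorem Finset.apply_zero_le_sum_range (c : ℕ → ℕ) {h : ℕ} (hh : 1 ≤ h) :
    c 0 ≤ ∑ i ∈ range h, c i :=
  single_le_sum (fun _ _ ↦ Nat.zero_le _) (mem_range.2 hh)

theorem Finset.sum_range_le_of_le (c : ℕ → ℕ) {h r : ℕ} (hhr : h ≤ r) :
    ∑ i ∈ range h, c i ≤ ∑ i ∈ range r, c i :=
  sum_le_sum_of_subset (range_subset_range.2 hhr)

theorem stmt2_general (r m : ℕ) (c : ℕ → ℕ)
    (hm : m = ∑ i ∈ Finset.range r, c i)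
    (h1 : m + 2 ≤ 2 * c 0) :
    ∀ h k, 1 ≤ h → h ≤ r → 1 ≤ k → k ≤ r →
      ((∑ i ∈ Finset.range h, c i : ℕ) : ZMod m) ≠
        ((m + 1 - c 0 + ∑ i ∈ Finset.range k, c i : ℕ) : ZMod m) := by
  intro h k h1h hhr h1k hkr
  have hSh₀ := apply_zero_le_sum_range c h1h
  have hSk₀ := apply_zero_le_sum_range c h1k
  have hShm := hm ▸ sum_range_le_of_le c hhr
  have hSkm := hm ▸ sum_range_le_of_le c hkr
  exact ZMod.natCast_ne_natCast_of_lt_of_lt_add (by omega) (by omega)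

/-- If `c 0, …, c (r-1)` are positive with sum `m` and `c 0 ≥ 1 + m/2`
(i.e. `2 * c 0 ≥ m + 2`), then the partial sums `S h` (for `1 ≤ h ≤ r`) and
the translates `(m + 1 - c 0) + S k` are disjoint modulo `m`. -/
theorem stmt2 (r m : ℕ) (c : ℕ → ℕ) (hr : 0 < r)
    (hc : ∀ i < r, 1 ≤ c i) (hm : m = ∑ i ∈ Finset.range r, c i)
    (h1 : m + 2 ≤ 2 * c 0) :
    ∀ h k, 1 ≤ h → h ≤ r → 1 ≤ k → k ≤ r →
      ((∑ i ∈ Finset.range h, c i : ℕ) : ZMod m) ≠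
        ((m + 1 - c 0 + ∑ i ∈ Finset.range k, c i : ℕ) : ZMod m) :=
  stmt2_general r m c hm h1
end

section
/- For positive integers c_1,...,c_r all ≥ 2 with m = ∑ c_i, and any consecutive block sum T = c_{k+1} + ... + c_h (with k < h ≤ r, nonempty), T is not congruent to 1 or -1 modulo m. -/
/-!
Split `m` as `T + S`, where `T` is the block sum and `S` the sum of the remaining `c i`.
Every `c i` is at least `2`, so `2 ≤ T ≤ m` and `S ≠ 1`. Hence `T - 1` lies strictly between
`0` and `m`, and `T + 1` lies in `[3, m + 1]` without being `m`; neither is a multiple of `m`.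
-/

namespace Finset

variable {ι : Type*} {s : Finset ι} {f : ι → ℕ}

theorem two_le_sum_of_nonempty (hs : s.Nonempty) (hf : ∀ i ∈ s, 2 ≤ f i) :
    2 ≤ ∑ i ∈ s, f i := by
  obtain ⟨j, hj⟩ := hs
  exact (hf j hj).trans (single_le_sum (fun i _ => Nat.zero_le (f i)) hj)

theorem sum_ne_one_of_two_le (hf : ∀ i ∈ s, 2 ≤ f i) : ∑ i ∈ s, f i ≠ 1 := by
  rcases s.eq_empty_or_nonempty with rfl | hs
  · simp
  · have := two_le_sum_of_nonempty hs hf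
    omega

end Finset

namespace ZMod

variable {m T : ℕ}

theorem natCast_ne_one_of_two_le_of_le (hT : 2 ≤ T) (hTm : T ≤ m) : (T : ZMod m) ≠ 1 := by
  intro h
  have hdvd : m ∣ T - 1 := by
    rw [← natCast_eq_zero_iff, Nat.cast_sub (by omega), h, Nat.cast_one, sub_self]
  have := Nat.le_of_dvd (by omega) hdvd
  omega

theorem natCast_ne_neg_one_of_two_le_of_le (hT : 2 ≤ T) (hTm : T ≤ m) (hm : T + 1 ≠ m) :
    (T : ZMod m) ≠ -1 := by
  intro h
  obtain ⟨q, hq⟩ : m ∣ T + 1 := by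
    rw [← natCast_eq_zero_iff, Nat.cast_add, h, Nat.cast_one, neg_add_cancel]
  rcases q with _ | _ | q
  · omega
  · omega
  · nlinarith

end ZMod

/-- For positive integers `c 0, …, c (r-1)` all `≥ 2` with sum `m`, any nonempty
consecutive block sum `c k + c (k+1) + ⋯ + c (h-1)` (with `k < h ≤ r`) is not
congruent to `1` or `-1` modulo `m`. -/
theorem stmt3 (r m : ℕ) (c : ℕ → ℕ) (hc : ∀ i < r, 2 ≤ c i)
    (hm : m = ∑ i ∈ Finset.range r, c i) :
    ∀ k h, k < h → h ≤ r →
      ((∑ i ∈ Finset.Ico k h, c i : ℕ) : ZMod m) ≠ 1 ∧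
      ((∑ i ∈ Finset.Ico k h, c i : ℕ) : ZMod m) ≠ -1 := by
  intro k h hkh hhr
  have hsub : Finset.Ico k h ⊆ Finset.range r := fun i hi => by
    simp only [Finset.mem_Ico, Finset.mem_range] at hi ⊢
    omega
  have hc' : ∀ i ∈ Finset.range r, 2 ≤ c i := fun i hi => hc i (Finset.mem_range.1 hi)
  have hT : 2 ≤ ∑ i ∈ Finset.Ico k h, c i :=
    Finset.two_le_sum_of_nonempty (Finset.nonempty_Ico.2 hkh) fun i hi => hc' i (hsub hi)
  have hS : ∑ i ∈ Finset.range r \ Finset.Ico k h, c i ≠ 1 :=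
    Finset.sum_ne_one_of_two_le fun i hi => hc' i (Finset.mem_sdiff.1 hi).1
  have hsplit := Finset.sum_sdiff hsub (f := c)
  rw [← hm] at hsplit
  exact ⟨ZMod.natCast_ne_one_of_two_le_of_le hT (by omega),
    ZMod.natCast_ne_neg_one_of_two_le_of_le hT (by omega) (by omega)⟩
end
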